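/- Let f: A→B, g: B→C be 1-cells and φ: f∘g ⟹ 0 a 2-cell in S forming a complex. If the diagram (f, g, φ) is 2-exact in B and g is cofaithful, then (C, g, φ) is a cokernel of f. -/

import Mathlib

/-!
Common framework: relatively exact 2-categories (after Nakaoka,
"Cohomology theory in 2-categories").
-/

open CategoryTheory Bicategory

universe w v u

/-- The tensor unit of a monoidal structure, given explicitly. -/
abbrev munit {H : Type v} [Category.{w} H] (m : MonoidalCategory H) : H :=
  @MonoidalCategoryStruct.tensorUnit H _ m.toMonoidalCategoryStruct

/-- The tensor product of two objects, for an explicitly given monoidal structure. -/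
abbrev mtens {H : Type v} [Category.{w} H] (m : MonoidalCategory H) (x y : H) : H :=
  @MonoidalCategoryStruct.tensorObj H _ m.toMonoidalCategoryStruct x y

section Defs

variable {B : Type u} [Bicategory.{w, v} B]

/-- A 1-cell `f` is faithful if postwhiskering `− ▷ f` is injective on 2-cells. -/
def CFaithful {A C : B} (f : A ⟶ C) : Prop :=
  ∀ ⦃X : B⦄ ⦃g h : X ⟶ A⦄ (η θ : g ⟶ h), η ▷ f = θ ▷ f → η = θ

/-- A 1-cell `f` is fully faithful if `− ∘ f` is a fully faithful functor on hom-categories. -/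
def CFullyFaithful {A C : B} (f : A ⟶ C) : Prop :=
  CFaithful f ∧ ∀ ⦃X : B⦄ (g h : X ⟶ A) (μ : g ≫ f ⟶ h ≫ f), ∃ η : g ⟶ h, η ▷ f = μ

/-- A 1-cell `f` is cofaithful if prewhiskering `f ◁ −` is injective on 2-cells. -/
def CCofaithful {A C : B} (f : A ⟶ C) : Prop :=
  ∀ ⦃X : B⦄ ⦃g h : C ⟶ X⦄ (η θ : g ⟶ h), f ◁ η = f ◁ θ → η = θ

/-- A 1-cell `f` is fully cofaithful if `f ∘ −` is a fully faithful functor on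
hom-categories. -/
def CFullyCofaithful {A C : B} (f : A ⟶ C) : Prop :=
  CCofaithful f ∧ ∀ ⦃X : B⦄ (g h : C ⟶ X) (μ : f ≫ g ⟶ f ≫ h), ∃ η : g ⟶ h, f ◁ η = μ

/-- A 1-cell is an equivalence if it has a quasi-inverse up to invertible 2-cells. -/
def Is2Equiv {A C : B} (f : A ⟶ C) : Prop :=
  ∃ g : C ⟶ A, Nonempty (f ≫ g ≅ 𝟙 A) ∧ Nonempty (g ≫ f ≅ 𝟙 C)

/-- 2-universal product of two 0-cells. -/
def IsProduct2 (A₁ A₂ P : B) (p₁ : P ⟶ A₁) (p₂ : P ⟶ A₂) : Prop :=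
  (∀ (X : B) (q₁ : X ⟶ A₁) (q₂ : X ⟶ A₂),
    ∃ (q : X ⟶ P) (_ : q ≫ p₁ ⟶ q₁) (_ : q ≫ p₂ ⟶ q₂), True)
  ∧ (∀ (X : B) (q₁ : X ⟶ A₁) (q₂ : X ⟶ A₂) (r r' : X ⟶ P)
      (ξ₁ : r ≫ p₁ ⟶ q₁) (ξ₂ : r ≫ p₂ ⟶ q₂) (ξ₁' : r' ≫ p₁ ⟶ q₁) (ξ₂' : r' ≫ p₂ ⟶ q₂),
      ∃! η : r ⟶ r', ((η ▷ p₁) ≫ ξ₁' = ξ₁) ∧ ((η ▷ p₂) ≫ ξ₂' = ξ₂))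

/-- 2-universal coproduct of two 0-cells. -/
def IsCoproduct2 (A₁ A₂ P : B) (i₁ : A₁ ⟶ P) (i₂ : A₂ ⟶ P) : Prop :=
  (∀ (X : B) (q₁ : A₁ ⟶ X) (q₂ : A₂ ⟶ X),
    ∃ (q : P ⟶ X) (_ : i₁ ≫ q ⟶ q₁) (_ : i₂ ≫ q ⟶ q₂), True)
  ∧ (∀ (X : B) (q₁ : A₁ ⟶ X) (q₂ : A₂ ⟶ X) (r r' : P ⟶ X)
      (ξ₁ : i₁ ≫ r ⟶ q₁) (ξ₂ : i₂ ≫ r ⟶ q₂) (ξ₁' : i₁ ≫ r' ⟶ q₁) (ξ₂' : i₂ ≫ r' ⟶ q₂),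
      ∃! η : r ⟶ r', ((i₁ ◁ η) ≫ ξ₁' = ξ₁) ∧ ((i₂ ◁ η) ≫ ξ₂' = ξ₂))

/-- 2-universal difference kernel of a parallel pair of 1-cells. -/
def IsDiffKernel {A C : B} (g h : A ⟶ C) (D : B) (d : D ⟶ A) (φ : d ≫ g ⟶ d ≫ h) : Prop :=
  (∀ (X : B) (e : X ⟶ A) (ψ : e ≫ g ⟶ e ≫ h),
    ∃ (e' : X ⟶ D) (ε₀' : e' ≫ d ⟶ e),
      (α_ e' d g).hom ≫ (e' ◁ φ) ≫ (α_ e' d h).inv ≫ (ε₀' ▷ h) = (ε₀' ▷ g) ≫ ψ)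
  ∧ (∀ (X : B) (e : X ⟶ A) (ψ : e ≫ g ⟶ e ≫ h)
      (e₁ e₂ : X ⟶ D) (ε₀₁ : e₁ ≫ d ⟶ e) (ε₀₂ : e₂ ≫ d ⟶ e),
      ((α_ e₁ d g).hom ≫ (e₁ ◁ φ) ≫ (α_ e₁ d h).inv ≫ (ε₀₁ ▷ h) = (ε₀₁ ▷ g) ≫ ψ) →
      ((α_ e₂ d g).hom ≫ (e₂ ◁ φ) ≫ (α_ e₂ d h).inv ≫ (ε₀₂ ▷ h) = (ε₀₂ ▷ g) ≫ ψ) →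
      ∃! η : e₁ ⟶ e₂, (η ▷ d) ≫ ε₀₂ = ε₀₁)

/-- 2-universal pullback of a cospan of 1-cells. -/
def IsPullback2 {A₁ A₂ C : B} (f₁ : A₁ ⟶ C) (f₂ : A₂ ⟶ C) (P : B)
    (p₁ : P ⟶ A₂) (p₂ : P ⟶ A₁) (ξ : p₁ ≫ f₂ ⟶ p₂ ≫ f₁) : Prop :=
  (∀ (X : B) (g₁ : X ⟶ A₂) (g₂ : X ⟶ A₁) (η : g₁ ≫ f₂ ⟶ g₂ ≫ f₁),
    ∃ (g : X ⟶ P) (ξ₁ : g ≫ p₁ ⟶ g₁) (ξ₂ : g ≫ p₂ ⟶ g₂),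
      (ξ₁ ▷ f₂) ≫ η = (α_ g p₁ f₂).hom ≫ (g ◁ ξ) ≫ (α_ g p₂ f₁).inv ≫ (ξ₂ ▷ f₁))
  ∧ (∀ (X : B) (g₁ : X ⟶ A₂) (g₂ : X ⟶ A₁) (η : g₁ ≫ f₂ ⟶ g₂ ≫ f₁)
      (g g' : X ⟶ P) (ξ₁ : g ≫ p₁ ⟶ g₁) (ξ₂ : g ≫ p₂ ⟶ g₂)
      (ξ₁' : g' ≫ p₁ ⟶ g₁) (ξ₂' : g' ≫ p₂ ⟶ g₂),
      ((ξ₁ ▷ f₂) ≫ η = (α_ g p₁ f₂).hom ≫ (g ◁ ξ) ≫ (α_ g p₂ f₁).inv ≫ (ξ₂ ▷ f₁)) →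
      ((ξ₁' ▷ f₂) ≫ η = (α_ g' p₁ f₂).hom ≫ (g' ◁ ξ) ≫ (α_ g' p₂ f₁).inv ≫ (ξ₂' ▷ f₁)) →
      ∃! ζ : g ⟶ g', ((ζ ▷ p₁) ≫ ξ₁' = ξ₁) ∧ ((ζ ▷ p₂) ≫ ξ₂' = ξ₂))

end Defs

/-- A locally SCG 2-category: each hom-category is a symmetric categorical group,
`Hom` is a 2-functor into SCG (expressed through the zero 1-cells, the unit
constraints `sharp`/`flat` of the monoidal functors `f ∘ −`, `− ∘ f` and their
coherence), there is a zero object, and binary (co)products exist. -/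
structure LocSCG (B : Type u) [Bicategory.{w, v} B] where
  /-- symmetric monoidal structure on each hom-category -/
  monStr : ∀ A C : B, MonoidalCategory (A ⟶ C)
  symm : ∀ A C : B, @SymmetricCategory (A ⟶ C) _ (monStr A C)
  /-- every 2-cell is invertible -/
  cellIso : ∀ {A C : B} {f g : A ⟶ C} (η : f ⟶ g), IsIso η
  /-- every 1-cell is ⊗-invertible up to an isomorphism -/
  objInv : ∀ {A C : B} (f : A ⟶ C),
    ∃ g : A ⟶ C, Nonempty (mtens (monStr A C) f g ≅ munit (monStr A C))
  /-- zero 1-cells compose to zero 1-cells -/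
  zero_comp : ∀ A C E : B, munit (monStr A C) ≫ munit (monStr C E) = munit (monStr A E)
  /-- unit constraint `f_I^♯ : f ∘ 0 ⟶ 0` of the monoidal functor `f ∘ −` -/
  sharp : ∀ {A C E : B} (f : A ⟶ C), f ≫ munit (monStr C E) ≅ munit (monStr A E)
  /-- unit constraint `f_I^♭ : 0 ∘ f ⟶ 0` of the monoidal functor `− ∘ f` -/
  flat : ∀ {A C E : B} (f : C ⟶ E), munit (monStr A C) ≫ f ≅ munit (monStr A E)
  sharp_natural : ∀ {A C E : B} {f g : A ⟶ C} (η : f ⟶ g),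
    (η ▷ munit (monStr C E)) ≫ (sharp g).hom = (sharp f).hom
  flat_natural : ∀ {A C E : B} {f g : C ⟶ E} (η : f ⟶ g),
    (munit (monStr A C) ◁ η) ≫ (flat g).hom = (flat f).hom
  /-- unit constraints of zero 1-cells are identities -/
  sharp_zero : ∀ A C E : B,
    (sharp (E := E) (munit (monStr A C))).hom = eqToHom (zero_comp A C E)
  flat_zero : ∀ A C E : B,
    (flat (A := A) (munit (monStr C E))).hom = eqToHom (zero_comp A C E)
  sharp_comp : ∀ {A C E G : B} (f : A ⟶ C) (g : C ⟶ E),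
    (sharp (E := G) (f ≫ g)).hom
      = (α_ f g (munit (monStr E G))).hom ≫ (f ◁ (sharp g).hom) ≫ (sharp f).hom
  flat_comp : ∀ {X A C E : B} (f : A ⟶ C) (g : C ⟶ E),
    (flat (A := X) (f ≫ g)).hom
      = (α_ (munit (monStr X A)) f g).inv ≫ ((flat f).hom ▷ g) ≫ (flat g).hom
  sharp_flat : ∀ {A C E G : B} (f : A ⟶ C) (g : E ⟶ G),
    ((sharp f).hom ▷ g) ≫ (flat g).hom
      = (α_ f (munit (monStr C E)) g).hom ≫ (f ◁ (flat g).hom) ≫ (sharp f).hom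
  /-- tensor constraint of the monoidal functor `k ∘ −` -/
  sharpTensor : ∀ {X A C : B} (k : X ⟶ A) (g h : A ⟶ C),
    k ≫ mtens (monStr A C) g h ≅ mtens (monStr X C) (k ≫ g) (k ≫ h)
  /-- tensor constraint of the monoidal functor `− ∘ k` -/
  flatTensor : ∀ {A C E : B} (k : C ⟶ E) (g h : A ⟶ C),
    mtens (monStr A C) g h ≫ k ≅ mtens (monStr A E) (g ≫ k) (h ≫ k)
  /-- the zero object -/
  zObj : B
  homZZ : ∀ f : zObj ⟶ zObj, f = munit (monStr zObj zObj)
  cellZZ : ∀ (f g : zObj ⟶ zObj) (η θ : f ⟶ g), η = θ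
  toZero : ∀ {A : B} (f : A ⟶ zObj), f ⟶ munit (monStr A zObj)
  toZero_unique : ∀ {A : B} (f : A ⟶ zObj) (η θ : f ⟶ munit (monStr A zObj)), η = θ
  fromZero : ∀ {A : B} (f : zObj ⟶ A), f ⟶ munit (monStr zObj A)
  fromZero_unique : ∀ {A : B} (f : zObj ⟶ A) (η θ : f ⟶ munit (monStr zObj A)), η = θ
  hasProd : ∀ A₁ A₂ : B, ∃ (P : B) (p₁ : P ⟶ A₁) (p₂ : P ⟶ A₂), IsProduct2 A₁ A₂ P p₁ p₂
  hasCoprod : ∀ A₁ A₂ : B, ∃ (P : B) (i₁ : A₁ ⟶ P) (i₂ : A₂ ⟶ P), IsCoproduct2 A₁ A₂ P i₁ i₂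

namespace LocSCG

variable {B : Type u} [Bicategory.{w, v} B]

/-- the zero 1-cell `0_{A,C}`. -/
def zro (S : LocSCG B) (A C : B) : A ⟶ C := munit (S.monStr A C)

/-- tensor product of parallel 1-cells in a hom-category. -/
def tens (S : LocSCG B) {A C : B} (f g : A ⟶ C) : A ⟶ C := mtens (S.monStr A C) f g

/-- tensor product of 2-cells in a hom-category. -/
def tensHom (S : LocSCG B) {A C : B} {f₁ g₁ f₂ g₂ : A ⟶ C} (η : f₁ ⟶ g₁) (θ : f₂ ⟶ g₂) :
    S.tens f₁ f₂ ⟶ S.tens g₁ g₂ :=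
  @MonoidalCategoryStruct.tensorHom _ _ (S.monStr A C).toMonoidalCategoryStruct _ _ _ _ η θ

/-- associator of the hom-category monoidal structure. -/
def tassoc (S : LocSCG B) {A C : B} (f g h : A ⟶ C) :
    S.tens (S.tens f g) h ≅ S.tens f (S.tens g h) :=
  @MonoidalCategoryStruct.associator _ _ (S.monStr A C).toMonoidalCategoryStruct f g h

/-- left unitor of the hom-category monoidal structure. -/
def tlunit (S : LocSCG B) {A C : B} (f : A ⟶ C) : S.tens (S.zro A C) f ≅ f :=
  @MonoidalCategoryStruct.leftUnitor _ _ (S.monStr A C).toMonoidalCategoryStruct f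

/-- right unitor of the hom-category monoidal structure. -/
def trunit (S : LocSCG B) {A C : B} (f : A ⟶ C) : S.tens f (S.zro A C) ≅ f :=
  @MonoidalCategoryStruct.rightUnitor _ _ (S.monStr A C).toMonoidalCategoryStruct f

/-- inverse of a 2-cell. -/
noncomputable def inv2 (S : LocSCG B) {A C : B} {f g : A ⟶ C} (η : f ⟶ g) : g ⟶ f :=
  @CategoryTheory.inv _ _ _ _ η (S.cellIso η)

variable (S : LocSCG B)

/-- `(K, k, ε)` is a (2-universal) kernel of `f`. -/
def IsKernel {A C : B} (f : A ⟶ C) (K : B) (k : K ⟶ A) (ε₀ : k ≫ f ⟶ S.zro K C) : Prop :=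
  (∀ (X : B) (x : X ⟶ A) (e : x ≫ f ⟶ S.zro X C),
    ∃ (x' : X ⟶ K) (e' : x' ≫ k ⟶ x),
      (e' ▷ f) ≫ e = (α_ x' k f).hom ≫ (x' ◁ ε₀) ≫ (S.sharp x').hom)
  ∧ (∀ (X : B) (x : X ⟶ A) (e : x ≫ f ⟶ S.zro X C)
      (x₁ x₂ : X ⟶ K) (e₁ : x₁ ≫ k ⟶ x) (e₂ : x₂ ≫ k ⟶ x),
      ((e₁ ▷ f) ≫ e = (α_ x₁ k f).hom ≫ (x₁ ◁ ε₀) ≫ (S.sharp x₁).hom) →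
      ((e₂ ▷ f) ≫ e = (α_ x₂ k f).hom ≫ (x₂ ◁ ε₀) ≫ (S.sharp x₂).hom) →
      ∃! η : x₁ ⟶ x₂, (η ▷ k) ≫ e₂ = e₁)

/-- `(Q, c, π)` is a (2-universal) cokernel of `f`. -/
def IsCokernel {A C : B} (f : A ⟶ C) (Q : B) (c : C ⟶ Q) (π : f ≫ c ⟶ S.zro A Q) : Prop :=
  (∀ (X : B) (x : C ⟶ X) (e : f ≫ x ⟶ S.zro A X),
    ∃ (x' : Q ⟶ X) (e' : c ≫ x' ⟶ x),
      (f ◁ e') ≫ e = (α_ f c x').inv ≫ (π ▷ x') ≫ (S.flat x').hom)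
  ∧ (∀ (X : B) (x : C ⟶ X) (e : f ≫ x ⟶ S.zro A X)
      (x₁ x₂ : Q ⟶ X) (e₁ : c ≫ x₁ ⟶ x) (e₂ : c ≫ x₂ ⟶ x),
      ((f ◁ e₁) ≫ e = (α_ f c x₁).inv ≫ (π ▷ x₁) ≫ (S.flat x₁).hom) →
      ((f ◁ e₂) ≫ e = (α_ f c x₂).inv ≫ (π ▷ x₂) ≫ (S.flat x₂).hom) →
      ∃! η : x₁ ⟶ x₂, (c ◁ η) ≫ e₂ = e₁)

/-- compatibility of a candidate `(x, e)` with `φ` (relative kernel condition). -/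
def RelKerCompat {X A C E : B} (f : A ⟶ C) (g : C ⟶ E) (φ : f ≫ g ⟶ S.zro A E)
    (x : X ⟶ A) (e : x ≫ f ⟶ S.zro X C) : Prop :=
  (α_ x f g).hom ≫ (x ◁ φ) ≫ (S.sharp x).hom = (e ▷ g) ≫ (S.flat g).hom

/-- `(K, k, ε)` is a (2-universal) relative kernel `Ker(f, φ)` of `f : A ⟶ C`
relative to `g : C ⟶ E`, `φ : f ∘ g ⟶ 0`. -/
def IsRelKernel {A C E : B} (f : A ⟶ C) (g : C ⟶ E) (φ : f ≫ g ⟶ S.zro A E)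
    (K : B) (k : K ⟶ A) (ε₀ : k ≫ f ⟶ S.zro K C) : Prop :=
  S.RelKerCompat f g φ k ε₀
  ∧ (∀ (X : B) (x : X ⟶ A) (e : x ≫ f ⟶ S.zro X C), S.RelKerCompat f g φ x e →
      ∃ (x' : X ⟶ K) (e' : x' ≫ k ⟶ x),
        (e' ▷ f) ≫ e = (α_ x' k f).hom ≫ (x' ◁ ε₀) ≫ (S.sharp x').hom)
  ∧ (∀ (X : B) (x : X ⟶ A) (e : x ≫ f ⟶ S.zro X C), S.RelKerCompat f g φ x e →
      ∀ (x₁ x₂ : X ⟶ K) (e₁ : x₁ ≫ k ⟶ x) (e₂ : x₂ ≫ k ⟶ x),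
        ((e₁ ▷ f) ≫ e = (α_ x₁ k f).hom ≫ (x₁ ◁ ε₀) ≫ (S.sharp x₁).hom) →
        ((e₂ ▷ f) ≫ e = (α_ x₂ k f).hom ≫ (x₂ ◁ ε₀) ≫ (S.sharp x₂).hom) →
        ∃! η : x₁ ⟶ x₂, (η ▷ k) ≫ e₂ = e₁)

/-- compatibility of a candidate `(x, e)` with `φ` (relative cokernel condition). -/
def RelCokCompat {A C E X : B} (f : A ⟶ C) (g : C ⟶ E) (φ : f ≫ g ⟶ S.zro A E)
    (x : E ⟶ X) (e : g ≫ x ⟶ S.zro C X) : Prop :=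
  (φ ▷ x) ≫ (S.flat x).hom = (α_ f g x).hom ≫ (f ◁ e) ≫ (S.sharp f).hom

/-- `(Q, c, π)` is a (2-universal) relative cokernel `Cok(g, φ)` of `g : C ⟶ E`
relative to `f : A ⟶ C`, `φ : f ∘ g ⟶ 0`. -/
def IsRelCokernel {A C E : B} (f : A ⟶ C) (g : C ⟶ E) (φ : f ≫ g ⟶ S.zro A E)
    (Q : B) (c : E ⟶ Q) (π : g ≫ c ⟶ S.zro C Q) : Prop :=
  S.RelCokCompat f g φ c π
  ∧ (∀ (X : B) (x : E ⟶ X) (e : g ≫ x ⟶ S.zro C X), S.RelCokCompat f g φ x e →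
      ∃ (x' : Q ⟶ X) (e' : c ≫ x' ⟶ x),
        (g ◁ e') ≫ e = (α_ g c x').inv ≫ (π ▷ x') ≫ (S.flat x').hom)
  ∧ (∀ (X : B) (x : E ⟶ X) (e : g ≫ x ⟶ S.zro C X), S.RelCokCompat f g φ x e →
      ∀ (x₁ x₂ : Q ⟶ X) (e₁ : c ≫ x₁ ⟶ x) (e₂ : c ≫ x₂ ⟶ x),
        ((g ◁ e₁) ≫ e = (α_ g c x₁).inv ≫ (π ▷ x₁) ≫ (S.flat x₁).hom) →
        ((g ◁ e₂) ≫ e = (α_ g c x₂).inv ≫ (π ▷ x₂) ≫ (S.flat x₂).hom) →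
        ∃! η : x₁ ⟶ x₂, (c ◁ η) ≫ e₂ = e₁)

/-- a 0-cell is zero if it is equivalent to the zero object. -/
def ZeroEq (X : B) : Prop := ∃ e : X ⟶ S.zObj, Is2Equiv e

/-- 2-exactness of `(f, g, φ)` in the middle 0-cell: the cokernel of the induced
factorization of `f` through any kernel of `g` is zero. -/
def TwoExact {A C E : B} (f : A ⟶ C) (g : C ⟶ E) (φ : f ≫ g ⟶ S.zro A E) : Prop :=
  ∀ (K : B) (k : K ⟶ C) (ε₀ : k ≫ g ⟶ S.zro K E), S.IsKernel g K k ε₀ →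
  ∀ (fb : A ⟶ K) (φb : fb ≫ k ⟶ f),
    ((φb ▷ g) ≫ φ = (α_ fb k g).hom ≫ (fb ◁ ε₀) ≫ (S.sharp fb).hom) →
    S.IsCokernel fb S.zObj (S.zro K S.zObj) (S.sharp fb).hom

/-- relative 2-exactness at the middle 0-cell `A₂` of a 5-term window
`A₀ → A₁ → A₂ → A₃ → A₄` of a complex: the relative cohomology
`H = Cok(k, ν₂)` is equivalent to the zero object. -/
def RelTwoExactWindow {A₀ A₁ A₂ A₃ A₄ : B}
    (d₀ : A₀ ⟶ A₁) (d₁ : A₁ ⟶ A₂) (d₂ : A₂ ⟶ A₃) (d₃ : A₃ ⟶ A₄)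
    (δ₁ : d₀ ≫ d₁ ⟶ S.zro A₀ A₂) (δ₂ : d₁ ≫ d₂ ⟶ S.zro A₁ A₃)
    (δ₃ : d₂ ≫ d₃ ⟶ S.zro A₂ A₄) : Prop :=
  ∀ (Z : B) (z : Z ⟶ A₂) (ζ : z ≫ d₂ ⟶ S.zro Z A₃),
    S.IsRelKernel d₂ d₃ δ₃ Z z ζ →
  ∀ (k : A₁ ⟶ Z) (ν₁ : k ≫ z ⟶ d₁) (ν₂ : d₀ ≫ k ⟶ S.zro A₀ Z),
    ((ν₁ ▷ d₂) ≫ δ₂ = (α_ k z d₂).hom ≫ (k ◁ ζ) ≫ (S.sharp k).hom) →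
    ((α_ d₀ k z).hom ≫ (d₀ ◁ ν₁) ≫ δ₁ = (ν₂ ▷ z) ≫ (S.flat z).hom) →
  ∀ (H : B) (c : Z ⟶ H) (π : k ≫ c ⟶ S.zro A₁ H),
    S.IsRelCokernel d₀ k ν₂ H c π → S.ZeroEq H

end LocSCG

/-- The remaining axioms of a relatively exact 2-category: existence of kernels and
cokernels, and the characterization of (co)faithful 1-cells. -/
structure IsRelExact {B : Type u} [Bicategory.{w, v} B] (S : LocSCG B) : Prop where
  hasKer : ∀ {A C : B} (f : A ⟶ C),
    ∃ (K : B) (k : K ⟶ A) (ε₀ : k ≫ f ⟶ S.zro K C), S.IsKernel f K k ε₀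
  hasCok : ∀ {A C : B} (f : A ⟶ C),
    ∃ (Q : B) (c : C ⟶ Q) (π : f ≫ c ⟶ S.zro A Q), S.IsCokernel f Q c π
  faithful_iff : ∀ {A C : B} (f : A ⟶ C) (Q : B) (c : C ⟶ Q) (π : f ≫ c ⟶ S.zro A Q),
    S.IsCokernel f Q c π → (CFaithful f ↔ S.IsKernel c A f π)
  cofaithful_iff : ∀ {A C : B} (f : A ⟶ C) (K : B) (k : K ⟶ A) (ε₀ : k ≫ f ⟶ S.zro K C),
    S.IsKernel f K k ε₀ → (CCofaithful f ↔ S.IsCokernel k C f ε₀)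

/-- A (cochain) complex in a locally SCG 2-category. -/
structure Cpx {B : Type u} [Bicategory.{w, v} B] (S : LocSCG B) where
  X : ℤ → B
  d : ∀ n : ℤ, X n ⟶ X (n + 1)
  δ : ∀ n : ℤ, d n ≫ d (n + 1) ⟶ S.zro (X n) (X (n + 1 + 1))
  compat : ∀ n : ℤ,
    (α_ (d n) (d (n + 1)) (d (n + 1 + 1))).hom ≫ (d n ◁ δ (n + 1)) ≫ (S.sharp (d n)).hom
      = (δ n ▷ d (n + 1 + 1)) ≫ (S.flat (d (n + 1 + 1))).hom

/-- A morphism of complexes. -/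
structure CpxMor {B : Type u} [Bicategory.{w, v} B] (S : LocSCG B) (A₁ A₂ : Cpx S) where
  f : ∀ n : ℤ, A₁.X n ⟶ A₂.X n
  lam : ∀ n : ℤ, A₁.d n ≫ f (n + 1) ⟶ f n ≫ A₂.d n
  compat : ∀ n : ℤ,
    (A₁.δ n ▷ f (n + 1 + 1)) ≫ (S.flat (f (n + 1 + 1))).hom
      = (α_ (A₁.d n) (A₁.d (n + 1)) (f (n + 1 + 1))).hom ≫ (A₁.d n ◁ lam (n + 1))
          ≫ (α_ (A₁.d n) (f (n + 1)) (A₂.d (n + 1))).inv ≫ (lam n ▷ A₂.d (n + 1))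
          ≫ (α_ (f n) (A₂.d n) (A₂.d (n + 1))).hom ≫ (f n ◁ A₂.δ n) ≫ (S.sharp (f n)).hom

/-- An extension of complexes: degreewise an extension, with compatible 2-cells. -/
def IsCpxExtension {B : Type u} [Bicategory.{w, v} B] (S : LocSCG B) {A₁ A₂ A₃ : Cpx S}
    (F : CpxMor S A₁ A₂) (G : CpxMor S A₂ A₃)
    (φ : ∀ n : ℤ, F.f n ≫ G.f n ⟶ S.zro (A₁.X n) (A₃.X n)) : Prop :=
  (∀ n : ℤ, S.IsKernel (G.f n) (A₁.X n) (F.f n) (φ n)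
      ∧ S.IsCokernel (F.f n) (A₃.X n) (G.f n) (φ n))
  ∧ (∀ n : ℤ,
      (F.lam n ▷ G.f (n + 1)) ≫ (α_ (F.f n) (A₂.d n) (G.f (n + 1))).hom
          ≫ (F.f n ◁ G.lam n) ≫ (α_ (F.f n) (G.f n) (A₃.d n)).inv
          ≫ (φ n ▷ A₃.d n) ≫ (S.flat (A₃.d n)).hom
        = (α_ (A₁.d n) (F.f (n + 1)) (G.f (n + 1))).hom ≫ (A₁.d n ◁ φ (n + 1))
            ≫ (S.sharp (A₁.d n)).hom)

/-- A witness for the (relative) cohomology `H = Cok(k, ν₂)` of a complex at the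
0-cell `X (m + 2)`. -/
structure HWitness {B : Type u} [Bicategory.{w, v} B] (S : LocSCG B) (A : Cpx S) (m : ℤ) where
  Z : B
  z : Z ⟶ A.X (m + 1 + 1)
  ζ : z ≫ A.d (m + 1 + 1) ⟶ S.zro Z (A.X (m + 1 + 1 + 1))
  isZ : S.IsRelKernel (A.d (m + 1 + 1)) (A.d (m + 1 + 1 + 1)) (A.δ (m + 1 + 1)) Z z ζ
  k : A.X (m + 1) ⟶ Z
  ν₁ : k ≫ z ⟶ A.d (m + 1)
  ν₂ : A.d m ≫ k ⟶ S.zro (A.X m) Z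
  hν₁ : (ν₁ ▷ A.d (m + 1 + 1)) ≫ A.δ (m + 1)
      = (α_ k z (A.d (m + 1 + 1))).hom ≫ (k ◁ ζ) ≫ (S.sharp k).hom
  hν₂ : (α_ (A.d m) k z).hom ≫ (A.d m ◁ ν₁) ≫ A.δ m = (ν₂ ▷ z) ≫ (S.flat z).hom
  H : B
  c : Z ⟶ H
  π : k ≫ c ⟶ S.zro (A.X (m + 1)) H
  isH : S.IsRelCokernel (A.d m) k ν₂ H c π

/-!
Let `(K, k, ε₀)` be a kernel of `g` and `(a, φa)` the factorization of `f` through it.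
Cofaithfulness makes `(E, g, ε₀)` a cokernel of `k`, and 2-exactness says that `a` has
cokernel `0`, i.e. `θ ↦ (a ◁ θ) ≫ a_I^♯` is a bijection from 2-cells `y ⟶ 0` to 2-cells
`a ≫ y ⟶ 0`. So every `e : f ≫ x ⟶ 0` comes from a unique `θ : k ≫ x ⟶ 0`, and whiskering
the compatibility of `φa` with `φ` and `ε₀` shows that the factorizations of `(x, e)` through
`g` are exactly those of `(x, θ)`. Hence the cokernel property of `g` over `k` passes to `f`.
-/

namespace LocSCG

variable {B : Type u} [Bicategory.{w, v} B] (S : LocSCG B)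

def IsCokFactorization {A C Q X : B} (f : A ⟶ C) (c : C ⟶ Q) (π : f ≫ c ⟶ S.zro A Q)
    {x : C ⟶ X} (e : f ≫ x ⟶ S.zro A X) {x' : Q ⟶ X} (e' : c ≫ x' ⟶ x) : Prop :=
  (f ◁ e') ≫ e = (α_ f c x').inv ≫ (π ▷ x') ≫ (S.flat x').hom

/- The fields of `LocSCG` are phrased with `munit (S.monStr _ _)`, the definitions with
`S.zro`. `rw` does not unfold `S.zro`, so rewriting across the two takes `erw`, and the
resulting goals are closed by a `rfl` that identifies them. -/
theorem zro_comp_zro (A C E : B) : S.zro A C ≫ S.zro C E = S.zro A E :=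
  S.zero_comp A C E

theorem flat_zro (A C E : B) :
    (S.flat (A := A) (S.zro C E)).hom = eqToHom (S.zro_comp_zro A C E) :=
  S.flat_zero A C E

theorem whiskerLeft_flat_comp_sharp {A C D E : B} (f : A ⟶ C) (g : D ⟶ E) :
    (f ◁ (S.flat g).hom) ≫ (S.sharp f).hom
      = (α_ f (S.zro C D) g).inv ≫ ((S.sharp f).hom ▷ g) ≫ (S.flat g).hom := by
  dsimp only [zro]
  rw [S.sharp_flat, Iso.inv_hom_id_assoc]

theorem exists_whiskerLeft_comp_sharp_eq {A K X : B} {a : A ⟶ K}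
    (ha : S.IsCokernel a S.zObj (S.zro K S.zObj) (S.sharp a).hom)
    {y : K ⟶ X} (e : a ≫ y ⟶ S.zro A X) :
    ∃ θ : y ⟶ S.zro K X, (a ◁ θ) ≫ (S.sharp a).hom = e := by
  obtain ⟨w, ew, hw⟩ := ha.1 X y e
  have := S.cellIso ew
  refine ⟨inv ew ≫ (S.flat w).hom, ?_⟩
  erw [Bicategory.whiskerLeft_comp, Category.assoc, S.whiskerLeft_flat_comp_sharp, ← hw,
    ← inv_whiskerLeft, IsIso.inv_hom_id_assoc]

theorem isCokFactorization_zro_of_whiskerLeft_comp_sharp_eq {A K X : B} (a : A ⟶ K)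
    {y : K ⟶ X} {e : a ≫ y ⟶ S.zro A X} (θ : y ⟶ S.zro K X)
    (hθ : (a ◁ θ) ≫ (S.sharp a).hom = e) :
    S.IsCokFactorization a (S.zro K S.zObj) (S.sharp a).hom e
      (x' := S.zro S.zObj X) (eqToHom (S.zro_comp_zro K S.zObj X) ≫ S.inv2 θ) := by
  have := S.cellIso θ
  erw [IsCokFactorization, inv2, ← S.whiskerLeft_flat_comp_sharp, ← hθ, S.flat_zro,
    ← Bicategory.whiskerLeft_comp_assoc, Category.assoc, IsIso.inv_hom_id, Category.comp_id]
  rfl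

theorem whiskerLeft_comp_sharp_injective {A K X : B} {a : A ⟶ K}
    (ha : S.IsCokernel a S.zObj (S.zro K S.zObj) (S.sharp a).hom)
    {y : K ⟶ X} {θ₁ θ₂ : y ⟶ S.zro K X}
    (h : (a ◁ θ₁) ≫ (S.sharp a).hom = (a ◁ θ₂) ≫ (S.sharp a).hom) : θ₁ = θ₂ := by
  obtain ⟨η, hη, -⟩ := ha.2 X y _ _ _ _ _
    (S.isCokFactorization_zro_of_whiskerLeft_comp_sharp_eq a θ₁ rfl)
    (S.isCokFactorization_zro_of_whiskerLeft_comp_sharp_eq a θ₂ h.symm)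
  rw [S.fromZero_unique _ η (𝟙 _), Bicategory.whiskerLeft_id, Category.id_comp] at hη
  have := S.cellIso θ₁
  have := S.cellIso θ₂
  rw [cancel_epi, inv2, inv2, IsIso.inv_eq_inv] at hη
  exact hη.symm

theorem kernel_factorization_whiskerRight {A C E K X : B} {f : A ⟶ C} {g : C ⟶ E}
    {φ : f ≫ g ⟶ S.zro A E} {k : K ⟶ C} {ε₀ : k ≫ g ⟶ S.zro K E} {a : A ⟶ K}
    {φa : a ≫ k ⟶ f} (hφa : (φa ▷ g) ≫ φ = (α_ a k g).hom ≫ (a ◁ ε₀) ≫ (S.sharp a).hom)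
    (x' : E ⟶ X) :
    (a ◁ ((α_ k g x').inv ≫ (ε₀ ▷ x') ≫ (S.flat x').hom)) ≫ (S.sharp a).hom
      = (α_ a k (g ≫ x')).inv ≫ (φa ▷ (g ≫ x')) ≫ (α_ f g x').inv ≫ (φ ▷ x')
          ≫ (S.flat x').hom := by
  have hε₀ : (a ◁ ε₀) ≫ (S.sharp a).hom = (α_ a k g).inv ≫ (φa ▷ g) ≫ φ := by
    erw [hφa, Iso.inv_hom_id_assoc]
  have coh : (a ◁ (α_ k g x').inv) ≫ (α_ a (k ≫ g) x').inv ≫ ((α_ a k g).inv ▷ x')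
      ≫ ((φa ▷ g) ▷ x') = (α_ a k (g ≫ x')).inv ≫ (φa ▷ (g ≫ x')) ≫ (α_ f g x').inv := by
    bicategory
  erw [Bicategory.whiskerLeft_comp, Bicategory.whiskerLeft_comp, Category.assoc, Category.assoc,
    S.whiskerLeft_flat_comp_sharp, associator_inv_naturality_middle_assoc,
    ← Bicategory.comp_whiskerRight_assoc, hε₀, Bicategory.comp_whiskerRight,
    Bicategory.comp_whiskerRight, Category.assoc, Category.assoc, reassoc_of% coh]
  rfl

theorem isCokFactorization_iff_of_kernel_factorization {A C E K X : B} {f : A ⟶ C}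
    {g : C ⟶ E} {φ : f ≫ g ⟶ S.zro A E} {k : K ⟶ C} {ε₀ : k ≫ g ⟶ S.zro K E} {a : A ⟶ K}
    {φa : a ≫ k ⟶ f} (hφa : (φa ▷ g) ≫ φ = (α_ a k g).hom ≫ (a ◁ ε₀) ≫ (S.sharp a).hom)
    (ha : S.IsCokernel a S.zObj (S.zro K S.zObj) (S.sharp a).hom)
    {x : C ⟶ X} {e : f ≫ x ⟶ S.zro A X} {θ : k ≫ x ⟶ S.zro K X}
    (hθ : (a ◁ θ) ≫ (S.sharp a).hom = (α_ a k x).inv ≫ (φa ▷ x) ≫ e)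
    (x' : E ⟶ X) (e' : g ≫ x' ⟶ x) :
    S.IsCokFactorization f g φ e e' ↔ S.IsCokFactorization k g ε₀ θ e' := by
  have hθe' : (a ◁ ((k ◁ e') ≫ θ)) ≫ (S.sharp a).hom
      = (α_ a k (g ≫ x')).inv ≫ (φa ▷ (g ≫ x')) ≫ (f ◁ e') ≫ e := by
    erw [Bicategory.whiskerLeft_comp, Category.assoc, hθ,
      associator_inv_naturality_right_assoc, whisker_exchange_assoc]
    rfl
  have hR := S.kernel_factorization_whiskerRight hφa x'
  constructor
  · intro hf
    apply S.whiskerLeft_comp_sharp_injective ha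
    refine hθe'.trans (Eq.trans ?_ hR.symm)
    rw [IsCokFactorization] at hf
    rw [hf]
    rfl
  · intro hk
    have := S.cellIso φa
    have h := hθe'.symm.trans ((congrArg (fun θ => (a ◁ θ) ≫ (S.sharp a).hom) hk).trans hR)
    exact (cancel_epi _).mp ((cancel_epi _).mp h)

theorem IsCokernel.of_isCokFactorization_iff {A K C E : B} {f : A ⟶ C} {k : K ⟶ C}
    {g : C ⟶ E} {φ : f ≫ g ⟶ S.zro A E} {ε₀ : k ≫ g ⟶ S.zro K E}
    (hk : S.IsCokernel k E g ε₀)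
    (h : ∀ (X : B) (x : C ⟶ X) (e : f ≫ x ⟶ S.zro A X), ∃ θ : k ≫ x ⟶ S.zro K X,
      ∀ (x' : E ⟶ X) (e' : g ≫ x' ⟶ x),
        S.IsCokFactorization f g φ e e' ↔ S.IsCokFactorization k g ε₀ θ e') :
    S.IsCokernel f E g φ := by
  constructor
  · intro X x e
    obtain ⟨θ, hθ⟩ := h X x e
    obtain ⟨x', e', hfac⟩ := hk.1 X x θ
    exact ⟨x', e', (hθ x' e').2 hfac⟩
  · intro X x e x₁ x₂ e₁ e₂ h₁ h₂
    obtain ⟨θ, hθ⟩ := h X x e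
    exact hk.2 X x θ x₁ x₂ e₁ e₂ ((hθ x₁ e₁).1 h₁) ((hθ x₂ e₂).1 h₂)

end LocSCG

theorem stmt17_general {B : Type u} [Bicategory.{w, v} B]
    (S : LocSCG B) (hS : IsRelExact S)
    {A C E : B} (f : A ⟶ C) (g : C ⟶ E) (φ : f ≫ g ⟶ S.zro A E)
    (hex : S.TwoExact f g φ) (hg : CCofaithful g) :
    S.IsCokernel f E g φ := by
  obtain ⟨K, k, ε₀, hker⟩ := hS.hasKer g
  obtain ⟨a, φa, hφa⟩ := hker.1 A f φ
  have ha := hex K k ε₀ hker a φa hφa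
  have hk : S.IsCokernel k E g ε₀ := (hS.cofaithful_iff g K k ε₀ hker).mp hg
  refine LocSCG.IsCokernel.of_isCokFactorization_iff S hk fun X x e => ?_
  obtain ⟨θ, hθ⟩ := S.exists_whiskerLeft_comp_sharp_eq ha ((α_ a k x).inv ≫ (φa ▷ x) ≫ e)
  exact ⟨θ, S.isCokFactorization_iff_of_kernel_factorization hφa ha hθ⟩

/-- if `(f, g, φ)` is 2-exact in `B` and `g` is cofaithful, then
`(C, g, φ)` is a cokernel of `f`. -/
theorem stmt17 {B : Type u} [Bicategory.{w, v} B] [Bicategory.Strict B]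
    (S : LocSCG B) (hS : IsRelExact S)
    {A C E : B} (f : A ⟶ C) (g : C ⟶ E) (φ : f ≫ g ⟶ S.zro A E)
    (hex : S.TwoExact f g φ) (hg : CCofaithful g) :
    S.IsCokernel f E g φ :=
  stmt17_general S hS f g φ hex hg
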